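/- arXiv:2602.15801 — 5 statements merged into one kernel-verified Lean document; each statement's English description precedes it below -/
import Mathlib

section
/- Let H be a complex Hilbert space, let A, S : H → H be continuous linear maps with S self-adjoint and A† ∘ S = S ∘ A, and let ħ > 0. Then the pseudo-inner product is conserved under the time evolution generated by A: for every t ∈ ℝ and all ψ, φ ∈ H, ⟨exp(−(i t/ħ)A) ψ, S (exp(−(i t/ħ)A) φ)⟩ = ⟨ψ, S φ⟩, where exp denotes the exponential of a bounded operator. -/
/-! With `c = -(i t / ħ)` we have `conj c = -c`, so `A† S = S A` makes `x = c A` satisfy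
`x† S = -S x`: `S` intertwines `x` with `-x†`, hence `exp x` with `exp (-x†) = (exp x)†⁻¹`,
i.e. `(exp x)† S exp x = S`. -/

open NormedSpace

theorem star_exp_mul_mul_exp_eq_self {𝕂 𝔸 : Type*} [RCLike 𝕂] [NormedRing 𝔸]
    [NormedAlgebra 𝕂 𝔸] [CompleteSpace 𝔸] [StarRing 𝔸] [ContinuousStar 𝔸] {x s : 𝔸}
    (h : star x * s = -(s * x)) : star (exp x) * s * exp x = s := by
  let : NormedAlgebra ℚ 𝔸 := NormedAlgebra.restrictScalars ℚ 𝕂 𝔸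
  have hsemiconj : SemiconjBy s x (-star x) := by
    rw [SemiconjBy, neg_mul, h, neg_neg]
  simpa [star_exp] using hsemiconj.exp_neg_mul_mul_exp_eq_self

theorem star_smul_mul_eq_neg_mul_smul {𝕜 A : Type*} [CommRing 𝕜] [StarRing 𝕜] [Ring A]
    [StarRing A] [Module 𝕜 A] [StarModule 𝕜 A] [IsScalarTower 𝕜 A A] [SMulCommClass 𝕜 A A]
    {c : 𝕜} {a s : A} (hc : star c = -c) (h : star a * s = s * a) :
    star (c • a) * s = -(s * (c • a)) := by
  rw [star_smul, hc, smul_mul_assoc, h, mul_smul_comm, neg_smul]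

theorem ContinuousLinearMap.inner_apply_apply_eq_of_adjoint_mul_mul_eq
    {𝕜 E : Type*} [RCLike 𝕜] [NormedAddCommGroup E] [InnerProductSpace 𝕜 E] [CompleteSpace E]
    {U S : E →L[𝕜] E} (h : adjoint U * S * U = S) (x y : E) :
    inner 𝕜 (U x) (S (U y)) = inner 𝕜 x (S y) := by
  rw [← adjoint_inner_right]
  exact congrArg (fun T : E →L[𝕜] E ↦ inner 𝕜 x (T y)) h

theorem pseudo_inner_conserved_under_time_evolution_general
    {H : Type*} [NormedAddCommGroup H] [InnerProductSpace ℂ H] [CompleteSpace H]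
    (A S : H →L[ℂ] H)
    (hA : (ContinuousLinearMap.adjoint A).comp S = S.comp A)
    (hbar : ℝ) :
    ∀ (t : ℝ) (ψ φ : H),
      (inner ℂ (NormedSpace.exp ((-(Complex.I * t / hbar)) • A) ψ)
             (S (NormedSpace.exp ((-(Complex.I * t / hbar)) • A) φ)) : ℂ)
        = inner ℂ ψ (S φ) := by
  intro t ψ φ
  have hc : star (-(Complex.I * t / hbar)) = -(-(Complex.I * t / hbar)) := by
    simp [Complex.conj_ofReal, neg_div]
  have hskew := star_smul_mul_eq_neg_mul_smul hc (a := A) (s := S) hA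
  refine ContinuousLinearMap.inner_apply_apply_eq_of_adjoint_mul_mul_eq ?_ ψ φ
  rw [← ContinuousLinearMap.star_eq_adjoint]
  exact star_exp_mul_mul_exp_eq_self (𝕂 := ℂ) hskew

/-- If `A† ∘ S = S ∘ A` with `S` self-adjoint, then the pseudo-inner
product `⟨ψ, φ⟩_S := ⟨ψ, S φ⟩` is conserved under the time evolution
`exp(−(i t/ħ) A)`. -/
theorem pseudo_inner_conserved_under_time_evolution
    {H : Type*} [NormedAddCommGroup H] [InnerProductSpace ℂ H] [CompleteSpace H]
    (A S : H →L[ℂ] H)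
    (hS : IsSelfAdjoint S)
    (hA : (ContinuousLinearMap.adjoint A).comp S = S.comp A)
    (hbar : ℝ) (hhbar : 0 < hbar) :
    ∀ (t : ℝ) (ψ φ : H),
      (inner ℂ (NormedSpace.exp ((-(Complex.I * t / hbar)) • A) ψ)
             (S (NormedSpace.exp ((-(Complex.I * t / hbar)) • A) φ)) : ℂ)
        = inner ℂ ψ (S φ) :=
  pseudo_inner_conserved_under_time_evolution_general A S hA hbar
end

section
/- Let τ > 0 and ħ > 0, and let ψ : ℝ → ℂ be continuous with compact support contained in the open interval (−1/τ, 1/τ). Define the deformed Fourier transform F_τψ : ℝ → ℂ by (F_τψ)(ξ) = √(τ√3/π) · ∫_{−1/τ}^{1/τ} ψ(x)/(1 − τx + τ²x²) · exp( −i · (2ξ/(τħ√3)) · ( arctan((2τx−1)/√3) + π/6 ) ) dx. Then Parseval's identity holds: (1/(2ħτ√3)) · ∫_ℝ |(F_τψ)(ξ)|² dξ = ∫_{−1/τ}^{1/τ} |ψ(x)|² / (1 − τx + τ²x²) dx. -/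
/-!
Substituting `x = (1 + √3 tan u) / (2τ)` turns `dx / (1 - τx + τ²x²)` into `2 / (τ√3) du` and the
phase `arctan ((2τx - 1)/√3) + π/6` into `u + π/6`, so the deformed transform of `ψ` is, up to a
constant and a unimodular factor, the ordinary Fourier transform of `φ = ψ ∘ x`, a continuous function
supported in `(-π/3, π/6)`. The identity is then Plancherel's theorem for `φ`. Plancherel for an
`L²` function supported in an interval of length `L` follows from Parseval's identity on that interval:
the Fourier coefficients of `f` modulated by `𝐞 (-xξ)` are the samples of `𝓕 f / L` on `ξ + ℤ/L`,
and integrating over `ξ ∈ (0, 1/L]` reassembles `∫ ‖𝓕 f‖²`.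
-/

open MeasureTheory Set Real FourierTransform
open scoped ENNReal

section Plancherel

variable {f : ℝ → ℂ} {a b : ℝ}

theorem lintegral_eq_setLIntegral_Ioc_tsum {T : ℝ} (hT : 0 < T) {F : ℝ → ℝ≥0∞}
    (hF : Measurable F) :
    ∫⁻ x, F x = ∫⁻ x in Ioc 0 T, ∑' n : ℤ, F (n * T + x) := by
  have hdom := isAddFundamentalDomain_Ioc hT 0
  rw [zero_add] at hdom
  let e : ℤ ≃ AddSubgroup.zmultiples T :=
    Equiv.ofBijective (fun n => ⟨n • T, n, rfl⟩)
      ⟨fun m n h => (zsmul_left_strictMono hT).injective (congrArg Subtype.val h),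
        fun ⟨_, n, hn⟩ => ⟨n, Subtype.ext hn⟩⟩
  rw [hdom.lintegral_eq_tsum'', ← e.tsum_eq, lintegral_tsum (f := fun (n : ℤ) x => F (n * T + x))
    fun n => (hF.comp (measurable_const_add _)).aemeasurable]
  simp [e, zsmul_eq_mul]

theorem fourierCoeffOn_fourierChar_smul (hab : a < b) (hf : Function.support f ⊆ Ioc a b)
    (ξ : ℝ) (n : ℤ) :
    fourierCoeffOn hab (fun x => 𝐞 (-(x * ξ)) • f x) n = (1 / (b - a)) • 𝓕 f (n / (b - a) + ξ) := by
  rw [fourierCoeffOn_eq_integral, fourier_real_eq_integral_exp_smul,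
    intervalIntegral.integral_eq_integral_of_support_subset]
  · congr 1
    refine integral_congr_ae (ae_of_all _ fun x => ?_)
    have hL : ((b - a : ℝ) : ℂ) ≠ 0 := Complex.ofReal_ne_zero.2 (sub_pos.2 hab).ne'
    simp only [fourier_coe_apply, Circle.smul_def, fourierChar_apply, smul_eq_mul, ← mul_assoc,
      ← Complex.exp_add]
    congr 2
    push_cast
    field_simp
    ring
  · exact fun x hx => hf fun h0 => hx (by simp [h0])

theorem hasSum_norm_sq_fourier_add (hab : a < b) (hf : MemLp f 2)
    (hsupp : Function.support f ⊆ Ioc a b) (ξ : ℝ) :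
    HasSum (fun n : ℤ => ‖𝓕 f (n / (b - a) + ξ)‖ ^ 2) ((b - a) * ∫ x, ‖f x‖ ^ 2) := by
  have hL : 0 < b - a := sub_pos.2 hab
  have hmod : MemLp (fun x => 𝐞 (-(x * ξ)) • f x) 2 (volume.restrict (Ioc a b)) :=
    (hf.restrict _).congr_norm
      (((by fun_prop : Continuous fun x : ℝ => (𝐞 (-(x * ξ)) : ℂ)).aestronglyMeasurable.smul
        hf.1.restrict))
      (ae_of_all _ fun x => (Circle.norm_smul _ _).symm)
  have h := (hasSum_sq_fourierCoeffOn hab hmod).mul_left ((b - a) ^ 2)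
  simp only [fourierCoeffOn_fourierChar_smul hab hsupp, Circle.norm_smul, norm_smul,
    intervalIntegral.integral_eq_integral_of_support_subset (f := fun x => ‖f x‖ ^ 2)
      (by simpa using hsupp), Real.norm_of_nonneg (one_div_pos.2 hL).le, smul_eq_mul] at h
  have hterm (n : ℤ) : (b - a) ^ 2 * (1 / (b - a) * ‖𝓕 f (n / (b - a) + ξ)‖) ^ 2
      = ‖𝓕 f (n / (b - a) + ξ)‖ ^ 2 := by
    field_simp
  have hsum : (b - a) ^ 2 * ((b - a)⁻¹ * ∫ x, ‖f x‖ ^ 2) = (b - a) * ∫ x, ‖f x‖ ^ 2 := by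
    field_simp
  simpa only [hterm, hsum] using h

theorem integral_norm_sq_fourier_of_support_subset_Ioc (hab : a < b) (hf : MemLp f 2)
    (hsupp : Function.support f ⊆ Ioc a b) :
    ∫ ξ, ‖𝓕 f ξ‖ ^ 2 = ∫ x, ‖f x‖ ^ 2 := by
  have hL : 0 < b - a := sub_pos.2 hab
  have hint : Integrable f :=
    IntegrableOn.integrable_of_forall_notMem_eq_zero ((hf.restrict (Ioc a b)).integrable one_le_two)
      fun x hx => Function.notMem_support.1 fun h => hx (hsupp h)
  have hcont : Continuous (𝓕 f) :=
    VectorFourier.fourierIntegral_continuous continuous_fourierChar (innerSL ℝ).continuous₂ hint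
  have hsq : Continuous fun ξ => ‖𝓕 f ξ‖ ^ 2 := by fun_prop
  have hperiodized (ξ : ℝ) :
      ∑' n : ℤ, ENNReal.ofReal (‖𝓕 f (n * (b - a)⁻¹ + ξ)‖ ^ 2)
        = ENNReal.ofReal ((b - a) * ∫ x, ‖f x‖ ^ 2) := by
    have h := hasSum_norm_sq_fourier_add hab hf hsupp ξ
    simp only [div_eq_mul_inv] at h
    rw [← ENNReal.ofReal_tsum_of_nonneg (fun n => by positivity) h.summable, h.tsum_eq]
  rw [integral_eq_lintegral_of_nonneg_ae (ae_of_all _ fun ξ => by positivity)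
      hsq.aestronglyMeasurable,
    lintegral_eq_setLIntegral_Ioc_tsum (inv_pos.2 hL) hsq.measurable.ennreal_ofReal]
  simp only [hperiodized, setLIntegral_const, volume_Ioc, sub_zero]
  rw [ENNReal.toReal_mul, ENNReal.toReal_ofReal (by positivity),
    ENNReal.toReal_ofReal (by positivity)]
  field_simp

end Plancherel

lemma neg_pi_div_three_le_pi_div_six : -(π / 3) ≤ π / 6 := by linarith [pi_pos]

/-- The inverse of `x ↦ arctan ((2τx - 1) / √3)`, which maps `[-π/3, π/6]` onto `[-1/τ, 1/τ]`;
the angle is clamped to `[-π/3, π/6]` so that the map is continuous on `ℝ`. -/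
noncomputable def angleToPosition (τ u : ℝ) : ℝ :=
  (1 + √3 * tan (projIcc (-(π / 3)) (π / 6) neg_pi_div_three_le_pi_div_six u)) / (2 * τ)

section Substitution

variable {τ u : ℝ}

lemma cos_ne_zero_of_mem_Icc (hu : u ∈ Icc (-(π / 3)) (π / 6)) : cos u ≠ 0 :=
  (cos_pos_of_mem_Ioo ⟨by linarith [hu.1, pi_pos], by linarith [hu.2, pi_pos]⟩).ne'

lemma one_add_sqrt_three_mul_tan_neg_pi_div_three : 1 + √3 * tan (-(π / 3)) = -2 := by
  rw [tan_neg, tan_pi_div_three, mul_neg, Real.mul_self_sqrt zero_le_three]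
  norm_num

lemma one_add_sqrt_three_mul_tan_pi_div_six : 1 + √3 * tan (π / 6) = 2 := by
  rw [tan_pi_div_six, mul_one_div_cancel (by positivity)]
  norm_num

theorem continuous_angleToPosition (τ : ℝ) : Continuous (angleToPosition τ) := by
  have htan : Continuous fun u =>
      tan (projIcc (-(π / 3)) (π / 6) neg_pi_div_three_le_pi_div_six u) :=
    continuousOn_tan.comp_continuous (continuous_subtype_val.comp continuous_projIcc)
      fun u => cos_ne_zero_of_mem_Icc (projIcc _ _ _ u).2
  unfold angleToPosition
  fun_prop

theorem angleToPosition_of_mem (hu : u ∈ Icc (-(π / 3)) (π / 6)) :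
    angleToPosition τ u = (1 + √3 * tan u) / (2 * τ) := by
  rw [angleToPosition, projIcc_of_mem _ hu]

theorem angleToPosition_of_le (hτ : τ ≠ 0) (hu : u ≤ -(π / 3)) :
    angleToPosition τ u = -(1 / τ) := by
  rw [angleToPosition, projIcc_of_le_left _ hu, one_add_sqrt_three_mul_tan_neg_pi_div_three]
  field_simp

theorem angleToPosition_of_ge (hτ : τ ≠ 0) (hu : π / 6 ≤ u) :
    angleToPosition τ u = 1 / τ := by
  rw [angleToPosition, projIcc_of_right_le _ hu, one_add_sqrt_three_mul_tan_pi_div_six]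
  field_simp

lemma quadratic_of_tan_substitution (hτ : τ ≠ 0) (y : ℝ) :
    1 - τ * ((1 + √3 * y) / (2 * τ)) + τ ^ 2 * ((1 + √3 * y) / (2 * τ)) ^ 2
      = 3 / 4 * (1 + y ^ 2) := by
  field_simp
  linear_combination (4 * y ^ 2 : ℝ) * Real.sq_sqrt (zero_le_three : (0 : ℝ) ≤ 3)

theorem integral_inv_quadratic_smul_eq {E : Type*} [NormedAddCommGroup E] [NormedSpace ℝ E]
    (hτ : 0 < τ) {g : ℝ → E} (hg : Continuous g) :
    ∫ x in -(1 / τ)..1 / τ, (1 - τ * x + τ ^ 2 * x ^ 2)⁻¹ • g x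
      = (2 / (τ * √3)) • ∫ u in -(π / 3)..π / 6, g (angleToPosition τ u) := by
  have hIcc : uIcc (-(π / 3)) (π / 6) = Icc (-(π / 3)) (π / 6) :=
    uIcc_of_le neg_pi_div_three_le_pi_div_six
  have hderiv : ∀ u ∈ uIcc (-(π / 3)) (π / 6), HasDerivAt (fun u => (1 + √3 * tan u) / (2 * τ))
      (√3 / (2 * τ) / cos u ^ 2) u := by
    intro u hu
    rw [hIcc] at hu
    exact (((hasDerivAt_tan (cos_ne_zero_of_mem_Icc hu)).const_mul √3).const_add 1).div_const
      (2 * τ) |>.congr_deriv (by ring)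
  have hcont : ContinuousOn (fun u => √3 / (2 * τ) / cos u ^ 2) (uIcc (-(π / 3)) (π / 6)) := by
    rw [hIcc]
    exact continuousOn_const.div (by fun_prop) fun u hu => pow_ne_zero 2 (cos_ne_zero_of_mem_Icc hu)
  have hG : Continuous fun x => (1 - τ * x + τ ^ 2 * x ^ 2)⁻¹ • g x :=
    ((by fun_prop : Continuous fun x : ℝ => 1 - τ * x + τ ^ 2 * x ^ 2).inv₀
      fun x => (by nlinarith [sq_nonneg (2 * τ * x - 1)] : 0 < 1 - τ * x + τ ^ 2 * x ^ 2).ne').smul hg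
  have hsubst := intervalIntegral.integral_deriv_smul_comp hderiv hcont hG
  simp only [Function.comp_def, one_add_sqrt_three_mul_tan_neg_pi_div_three,
    one_add_sqrt_three_mul_tan_pi_div_six] at hsubst
  rw [show (-2 : ℝ) / (2 * τ) = -(1 / τ) by field_simp,
    show (2 : ℝ) / (2 * τ) = 1 / τ by field_simp] at hsubst
  rw [← hsubst, ← intervalIntegral.integral_smul]
  refine intervalIntegral.integral_congr fun u hu => ?_
  rw [hIcc] at hu
  have hcos := cos_ne_zero_of_mem_Icc hu
  simp only [smul_smul, quadratic_of_tan_substitution hτ.ne', angleToPosition_of_mem hu]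
  congr 1
  rw [← inv_one_add_tan_sq hcos]
  field_simp
  linear_combination (4 : ℝ) * Real.sq_sqrt (zero_le_three : (0 : ℝ) ≤ 3)

theorem support_comp_angleToPosition_subset {M : Type*} [Zero M] {ψ : ℝ → M} (hτ : τ ≠ 0)
    (hleft : ψ (-(1 / τ)) = 0) (hright : ψ (1 / τ) = 0) :
    Function.support (ψ ∘ angleToPosition τ) ⊆ Ioo (-(π / 3)) (π / 6) := by
  intro u hu
  by_contra hout
  rcases not_and_or.1 hout with h | h
  · exact hu (by rw [Function.comp_apply, angleToPosition_of_le hτ (not_lt.1 h), hleft])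
  · exact hu (by rw [Function.comp_apply, angleToPosition_of_ge hτ (not_lt.1 h), hright])

theorem arctan_angleToPosition (hτ : τ ≠ 0) (hu : u ∈ Icc (-(π / 3)) (π / 6)) :
    arctan ((2 * τ * angleToPosition τ u - 1) / √3) = u := by
  have h3 : √3 ≠ 0 := by positivity
  rw [angleToPosition_of_mem hu, show (2 * τ * ((1 + √3 * tan u) / (2 * τ)) - 1) / √3 = tan u by
    field_simp; ring]
  exact arctan_tan (by linarith [hu.1, pi_pos]) (by linarith [hu.2, pi_pos])

theorem integral_deformed_kernel_eq_fourier {ψ : ℝ → ℂ} (hτ : 0 < τ) (hψ : Continuous ψ)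
    (hleft : ψ (-(1 / τ)) = 0) (hright : ψ (1 / τ) = 0) (k : ℝ) :
    ∫ x in -(1 / τ)..1 / τ, ψ x / ((1 - τ * x + τ ^ 2 * x ^ 2 : ℝ) : ℂ) *
        Complex.exp (-Complex.I * k * ((arctan ((2 * τ * x - 1) / √3) + π / 6 : ℝ) : ℂ))
      = ((2 / (τ * √3) : ℝ) : ℂ) * Complex.exp (↑(-(k * (π / 6))) * Complex.I) *
          𝓕 (ψ ∘ angleToPosition τ) (k / (2 * π)) := by
  set g : ℝ → ℂ := fun x =>
    ψ x * Complex.exp (-Complex.I * k * ((arctan ((2 * τ * x - 1) / √3) + π / 6 : ℝ) : ℂ))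
  have hg : Continuous g := by fun_prop
  have hsupp := support_comp_angleToPosition_subset hτ.ne' hleft hright
  have hphase : ∀ u ∈ uIcc (-(π / 3)) (π / 6), g (angleToPosition τ u)
      = (ψ ∘ angleToPosition τ) u * Complex.exp (-Complex.I * k * ((u + π / 6 : ℝ) : ℂ)) := by
    intro u hu
    rw [uIcc_of_le neg_pi_div_three_le_pi_div_six] at hu
    simp only [g, Function.comp_apply, arctan_angleToPosition hτ.ne' hu]
  calc ∫ x in -(1 / τ)..1 / τ, ψ x / ((1 - τ * x + τ ^ 2 * x ^ 2 : ℝ) : ℂ) *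
        Complex.exp (-Complex.I * k * ((arctan ((2 * τ * x - 1) / √3) + π / 6 : ℝ) : ℂ))
      = ∫ x in -(1 / τ)..1 / τ, (1 - τ * x + τ ^ 2 * x ^ 2)⁻¹ • g x := by
        congr 1 with x
        rw [Complex.real_smul, Complex.ofReal_inv]
        ring
    _ = ((2 / (τ * √3) : ℝ) : ℂ) * ∫ u, (ψ ∘ angleToPosition τ) u *
          Complex.exp (-Complex.I * k * ((u + π / 6 : ℝ) : ℂ)) := by
        rw [integral_inv_quadratic_smul_eq hτ hg, Complex.real_smul,
          intervalIntegral.integral_congr hphase,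
          intervalIntegral.integral_eq_integral_of_support_subset]
        exact fun u hu => Ioo_subset_Ioc_self (hsupp (Function.support_mul_subset_left _ _ hu))
    _ = _ := by
        rw [mul_assoc ((2 / (τ * √3) : ℝ) : ℂ), fourier_real_eq_integral_exp_smul,
          ← integral_const_mul (Complex.exp (↑(-(k * (π / 6))) * Complex.I))]
        congr 1
        refine integral_congr_ae (ae_of_all _ fun u => ?_)
        dsimp only
        rw [smul_eq_mul, mul_left_comm, ← mul_assoc, ← Complex.exp_add, mul_comm]
        congr 2
        push_cast
        field_simp
        ring

theorem norm_integral_deformed_kernel {ψ : ℝ → ℂ} (hτ : 0 < τ) (hψ : Continuous ψ)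
    (hleft : ψ (-(1 / τ)) = 0) (hright : ψ (1 / τ) = 0) (k : ℝ) :
    ‖∫ x in -(1 / τ)..1 / τ, ψ x / ((1 - τ * x + τ ^ 2 * x ^ 2 : ℝ) : ℂ) *
        Complex.exp (-Complex.I * k * ((arctan ((2 * τ * x - 1) / √3) + π / 6 : ℝ) : ℂ))‖
      = 2 / (τ * √3) * ‖𝓕 (ψ ∘ angleToPosition τ) (k / (2 * π))‖ := by
  rw [integral_deformed_kernel_eq_fourier hτ hψ hleft hright, norm_mul, norm_mul,
    Complex.norm_real, Complex.norm_exp_ofReal_mul_I, mul_one, Real.norm_of_nonneg (by positivity)]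

theorem memLp_comp_angleToPosition {E : Type*} [NormedAddCommGroup E] {ψ : ℝ → E}
    (hτ : τ ≠ 0) (hψ : Continuous ψ) (hleft : ψ (-(1 / τ)) = 0) (hright : ψ (1 / τ) = 0)
    (p : ℝ≥0∞) : MemLp (ψ ∘ angleToPosition τ) p :=
  (hψ.comp (continuous_angleToPosition τ)).memLp_of_hasCompactSupport <|
    HasCompactSupport.intro isCompact_Icc fun _ hu => Function.notMem_support.1 fun h =>
      hu (Ioo_subset_Icc_self (support_comp_angleToPosition_subset hτ hleft hright h))

theorem integral_norm_sq_div_quadratic_eq {E : Type*} [NormedAddCommGroup E] {ψ : ℝ → E}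
    (hτ : 0 < τ) (hψ : Continuous ψ) (hleft : ψ (-(1 / τ)) = 0) (hright : ψ (1 / τ) = 0) :
    ∫ x in -(1 / τ)..1 / τ, ‖ψ x‖ ^ 2 / (1 - τ * x + τ ^ 2 * x ^ 2)
      = 2 / (τ * √3) * ∫ u, ‖(ψ ∘ angleToPosition τ) u‖ ^ 2 := by
  simp only [div_eq_inv_mul (‖ψ _‖ ^ 2), ← smul_eq_mul (α := ℝ) _⁻¹]
  rw [integral_inv_quadratic_smul_eq hτ (by fun_prop), smul_eq_mul,
    intervalIntegral.integral_eq_integral_of_support_subset]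
  · rfl
  · intro u hu
    refine Ioo_subset_Ioc_self (support_comp_angleToPosition_subset hτ.ne' hleft hright ?_)
    simpa using hu

end Substitution

theorem deformed_fourier_parseval_general (τ hbar : ℝ) (hτ : 0 < τ) (hhbar : 0 < hbar)
    (ψ : ℝ → ℂ) (hψ : Continuous ψ)
    (hsupp : tsupport ψ ⊆ Set.Ioo (-(1 / τ)) (1 / τ)) :
    (1 / (2 * hbar * τ * Real.sqrt 3)) *
        ∫ ξ : ℝ,
          ‖(Real.sqrt (τ * Real.sqrt 3 / Real.pi) : ℂ) *
              ∫ x in (-(1 / τ))..(1 / τ),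
                ψ x / ((1 - τ * x + τ ^ 2 * x ^ 2 : ℝ) : ℂ) *
                  Complex.exp (-Complex.I * (2 * ξ / (τ * hbar * Real.sqrt 3) : ℝ) *
                    ((Real.arctan ((2 * τ * x - 1) / Real.sqrt 3) + Real.pi / 6 : ℝ) : ℂ))‖ ^ 2
      = ∫ x in (-(1 / τ))..(1 / τ), ‖ψ x‖ ^ 2 / (1 - τ * x + τ ^ 2 * x ^ 2) := by
  have hleft : ψ (-(1 / τ)) = 0 := image_eq_zero_of_notMem_tsupport fun h => (hsupp h).1.false
  have hright : ψ (1 / τ) = 0 := image_eq_zero_of_notMem_tsupport fun h => (hsupp h).2.false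
  have hscale (ξ : ℝ) : 2 * ξ / (τ * hbar * √3) / (2 * π) = (π * τ * hbar * √3)⁻¹ * ξ := by
    field_simp
  simp only [norm_mul, norm_integral_deformed_kernel hτ hψ hleft hright, hscale, Complex.norm_real,
    norm_of_nonneg (sqrt_nonneg _), mul_pow, sq_sqrt (by positivity : 0 ≤ τ * √3 / π)]
  rw [integral_const_mul, integral_const_mul,
    Measure.integral_comp_mul_left (fun η => ‖𝓕 (ψ ∘ angleToPosition τ) η‖ ^ 2),
    integral_norm_sq_fourier_of_support_subset_Ioc (by linarith [pi_pos])
      (memLp_comp_angleToPosition hτ.ne' hψ hleft hright 2)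
      ((support_comp_angleToPosition_subset hτ.ne' hleft hright).trans Ioo_subset_Ioc_self),
    integral_norm_sq_div_quadratic_eq hτ hψ hleft hright, abs_of_pos (by positivity), smul_eq_mul]
  field_simp

/-- Parseval's identity for the deformed Fourier transform
`(F_τψ)(ξ) = √(τ√3/π) ∫_{−1/τ}^{1/τ} ψ(x) f(x)⁻¹ exp(−i(2ξ/(τħ√3))(arctan((2τx−1)/√3)+π/6)) dx`:
`(1/(2ħτ√3)) ∫_ℝ |(F_τψ)(ξ)|² dξ = ∫_{−1/τ}^{1/τ} |ψ(x)|²/f(x) dx`. -/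
theorem deformed_fourier_parseval (τ hbar : ℝ) (hτ : 0 < τ) (hhbar : 0 < hbar)
    (ψ : ℝ → ℂ) (hψ : Continuous ψ) (hcsupp : HasCompactSupport ψ)
    (hsupp : tsupport ψ ⊆ Set.Ioo (-(1 / τ)) (1 / τ)) :
    (1 / (2 * hbar * τ * Real.sqrt 3)) *
        ∫ ξ : ℝ,
          ‖(Real.sqrt (τ * Real.sqrt 3 / Real.pi) : ℂ) *
              ∫ x in (-(1 / τ))..(1 / τ),
                ψ x / ((1 - τ * x + τ ^ 2 * x ^ 2 : ℝ) : ℂ) *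
                  Complex.exp (-Complex.I * (2 * ξ / (τ * hbar * Real.sqrt 3) : ℝ) *
                    ((Real.arctan ((2 * τ * x - 1) / Real.sqrt 3) + Real.pi / 6 : ℝ) : ℂ))‖ ^ 2
      = ∫ x in (-(1 / τ))..(1 / τ), ‖ψ x‖ ^ 2 / (1 - τ * x + τ ^ 2 * x ^ 2) :=
  deformed_fourier_parseval_general τ hbar hτ hhbar ψ hψ hsupp
end

section
/- Let τ > 0 and ħ > 0, and let ψ : ℝ → ℂ be smooth (infinitely differentiable) with compact support contained in the open interval (−1/τ, 1/τ). Let F_τψ be its deformed Fourier transform. Then the inversion formula holds: for every x ∈ (−1/τ, 1/τ), ψ(x) = (1/(ħ√(4πτ√3))) · ∫_ℝ (F_τψ)(ξ) · exp( i · (2ξ/(τħ√3)) · ( arctan((2τx−1)/√3) + π/6 ) ) dξ. -/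
open MeasureTheory

open Real Complex FourierTransform

lemma integrable_fourier_of_smooth_compsupp {g : ℝ → ℂ}
    (hg : ContDiff ℝ ((⊤:ℕ∞) : WithTop ℕ∞) g) (hsupp : HasCompactSupport g) :
    Integrable (𝓕 g) := by
  have hg1 : Integrable g := hg.continuous.integrable_of_hasCompactSupport hsupp
  have hd : ContDiff ℝ ((⊤:ℕ∞) : WithTop ℕ∞) (deriv g) := (contDiff_infty_iff_deriv.mp hg).2
  have hds : HasCompactSupport (deriv g) := hsupp.deriv
  have hd1 : Integrable (deriv g) := hd.continuous.integrable_of_hasCompactSupport hds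
  have hdd1 : Integrable (deriv (deriv g)) :=
    ((contDiff_infty_iff_deriv.mp hd).2).continuous.integrable_of_hasCompactSupport hds.deriv
  have e1 : 𝓕 (deriv g) = fun x : ℝ ↦ (2 * π * I * x) • (𝓕 g x) :=
    Real.fourier_deriv hg1 (hg.differentiable (by simp)) hd1
  have e2 : 𝓕 (deriv (deriv g)) = fun x : ℝ ↦ (2 * π * I * x) • (𝓕 (deriv g) x) :=
    Real.fourier_deriv hd1 (hd.differentiable (by simp)) hdd1
  set C : ℝ := (∫ v, ‖g v‖) + ∫ v, ‖deriv (deriv g) v‖ with hC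
  have hbound : ∀ x : ℝ, ‖𝓕 g x‖ ≤ C * (1 + (2*π*x)^2)⁻¹ := by
    intro x
    have h1 : ‖𝓕 g x‖ ≤ ∫ v, ‖g v‖ :=
      VectorFourier.norm_fourierIntegral_le_integral_norm _ _ _ _ _
    have h2 : ‖𝓕 (deriv (deriv g)) x‖ ≤ ∫ v, ‖deriv (deriv g) v‖ :=
      VectorFourier.norm_fourierIntegral_le_integral_norm _ _ _ _ _
    have key : 𝓕 g x - 𝓕 (deriv (deriv g)) x = ((1 + (2*π*x)^2 : ℝ) : ℂ) * 𝓕 g x := by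
      rw [e2]; rw [e1]
      simp only [smul_eq_mul]
      push_cast
      ring_nf
      rw [Complex.I_sq]
      ring
    have hpos : (0:ℝ) < 1 + (2*π*x)^2 := by positivity
    have hn : (1 + (2*π*x)^2) * ‖𝓕 g x‖ = ‖𝓕 g x - 𝓕 (deriv (deriv g)) x‖ := by
      rw [key, norm_mul, Complex.norm_real, Real.norm_eq_abs, abs_of_pos hpos]
    have : ‖𝓕 g x‖ = (1 + (2*π*x)^2)⁻¹ * ‖𝓕 g x - 𝓕 (deriv (deriv g)) x‖ := by
      rw [← hn]; field_simp
    rw [this, mul_comm C]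
    gcongr
    exact (norm_sub_le _ _).trans (add_le_add h1 h2)
  have hbint : Integrable (fun x : ℝ => C * (1 + (2*π*x)^2)⁻¹) := by
    have h2 : Integrable (fun x : ℝ => (1 + (2*π*x)^2)⁻¹) := by
      have := integrable_inv_one_add_sq.comp_mul_left' (R := 2*π) (by positivity)
      simpa using this
    exact h2.const_mul C
  have hcont : Continuous (𝓕 g) :=
    VectorFourier.fourierIntegral_continuous Real.continuous_fourierChar
      (by exact continuous_inner) hg1
  exact hbint.mono' hcont.aestronglyMeasurable (Filter.Eventually.of_forall hbound)


/-- Inversion formula for the deformed Fourier transform: for smooth,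
compactly supported `ψ` with support in `(−1/τ, 1/τ)` and any `x` in that interval,
`ψ(x) = (1/(ħ√(4πτ√3))) ∫_ℝ (F_τψ)(ξ) exp(i(2ξ/(τħ√3))(arctan((2τx−1)/√3)+π/6)) dξ`. -/
theorem deformed_fourier_inversion (τ hbar : ℝ) (hτ : 0 < τ) (hhbar : 0 < hbar)
    (ψ : ℝ → ℂ) (hψ : ContDiff ℝ (⊤ : ℕ∞) ψ) (hcsupp : HasCompactSupport ψ)
    (hsupp : tsupport ψ ⊆ Set.Ioo (-(1 / τ)) (1 / τ)) :
    ∀ x ∈ Set.Ioo (-(1 / τ)) (1 / τ),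
      ψ x = ((1 / (hbar * Real.sqrt (4 * Real.pi * τ * Real.sqrt 3)) : ℝ) : ℂ) *
        ∫ ξ : ℝ,
          ((Real.sqrt (τ * Real.sqrt 3 / Real.pi) : ℂ) *
              ∫ y in (-(1 / τ))..(1 / τ),
                ψ y / ((1 - τ * y + τ ^ 2 * y ^ 2 : ℝ) : ℂ) *
                  Complex.exp (-Complex.I * (2 * ξ / (τ * hbar * Real.sqrt 3) : ℝ) *
                    ((Real.arctan ((2 * τ * y - 1) / Real.sqrt 3) + Real.pi / 6 : ℝ) : ℂ))) *
            Complex.exp (Complex.I * (2 * ξ / (τ * hbar * Real.sqrt 3) : ℝ) *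
              ((Real.arctan ((2 * τ * x - 1) / Real.sqrt 3) + Real.pi / 6 : ℝ) : ℂ)) := by
  intro x hx
  have hπ : (0:ℝ) < π := Real.pi_pos
  have hs0 : (0:ℝ) < Real.sqrt 3 := by positivity
  have hs : Real.sqrt 3 ^ 2 = 3 := Real.sq_sqrt (by norm_num)
  have hs5 : Real.sqrt 3 * Real.sqrt 3 = 3 := Real.mul_self_sqrt (by norm_num)
  have hτ0 : τ ≠ 0 := ne_of_gt hτ
  set u : ℝ → ℝ := fun y => Real.arctan ((2 * τ * y - 1) / Real.sqrt 3) + π / 6 with hu_def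
  set w : ℝ → ℝ := fun v => (1 + Real.sqrt 3 * Real.tan (v - π / 6)) / (2 * τ) with hw_def
  have hwu : ∀ y, w (u y) = y := by
    intro y
    have h0 : u y - π/6 = Real.arctan ((2 * τ * y - 1) / Real.sqrt 3) := by
      simp [hu_def]
    rw [hw_def]
    simp only [h0, Real.tan_arctan]
    field_simp
    ring
  have hu_mem : ∀ y, u y ∈ Set.Ioo (-(π/3)) (2*π/3) := by
    intro y
    have h1 := Real.neg_pi_div_two_lt_arctan ((2 * τ * y - 1) / Real.sqrt 3)
    have h2 := Real.arctan_lt_pi_div_two ((2 * τ * y - 1) / Real.sqrt 3)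
    constructor <;> simp only [hu_def] <;> linarith
  have huw : ∀ v ∈ Set.Ioo (-(π/3)) (2*π/3), u (w v) = v := by
    intro v hv
    have h1 : -(π/2) < v - π/6 := by have := hv.1; linarith
    have h2 : v - π/6 < π/2 := by have := hv.2; linarith
    have harg : (2 * τ * (w v) - 1) / Real.sqrt 3 = Real.tan (v - π/6) := by
      rw [hw_def]
      field_simp
      ring
    simp only [hu_def, harg, Real.arctan_tan h1 h2]
    ring
  have ha : u (-(1/τ)) = -(π/6) := by
    have h1 : (2 * τ * (-(1/τ)) - 1) / Real.sqrt 3 = -(Real.sqrt 3) := by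
      field_simp
      nlinarith [hs5]
    have h2 : Real.arctan (Real.sqrt 3) = π/3 := by
      rw [← Real.tan_pi_div_three, Real.arctan_tan (by linarith) (by linarith)]
    simp only [hu_def, h1, Real.arctan_neg, h2]
    ring
  have hb : u (1/τ) = π/3 := by
    have h1 : (2 * τ * (1/τ) - 1) / Real.sqrt 3 = 1 / Real.sqrt 3 := by
      field_simp
      norm_num
    have h2 : Real.arctan (1 / Real.sqrt 3) = π/6 := by
      rw [← Real.tan_pi_div_six, Real.arctan_tan (by linarith) (by linarith)]
    simp only [hu_def, h1, h2]
    ring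
  have humono : StrictMono u := by
    intro a b hab
    have h1 : (2*τ*a - 1)/Real.sqrt 3 < (2*τ*b - 1)/Real.sqrt 3 := by
      apply div_lt_div_of_pos_right _ hs0
      · linarith [mul_lt_mul_of_pos_left hab (by linarith : (0:ℝ) < 2*τ)]
    have := Real.arctan_strictMono h1
    simp only [hu_def]
    linarith
  have humem : ∀ y ∈ Set.Ioo (-(1/τ)) (1/τ), u y ∈ Set.Ioo (-(π/6)) (π/3) := by
    intro y hy
    constructor
    · have := humono hy.1
      rw [ha] at this; linarith
    · have := humono hy.2
      rw [hb] at this; linarith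
  set S : Set ℝ := Set.Ioo (-(π/3)) (2*π/3) with hS_def
  set g : ℝ → ℂ := S.indicator (fun v => ψ (w v)) with hg_def
  have hgu : ∀ y, g (u y) = ψ y := by
    intro y
    rw [hg_def, Set.indicator_of_mem (hu_mem y), hwu]
  have hu_cont : Continuous u := by
    apply Continuous.add _ continuous_const
    exact Real.continuous_arctan.comp (by fun_prop)
  set Kc : Set ℝ := u '' tsupport ψ with hKc_def
  have hKc_comp : IsCompact Kc := hcsupp.image hu_cont
  have hKc_sub : Kc ⊆ Set.Ioo (-(π/6)) (π/3) := by
    rintro _ ⟨y, hy, rfl⟩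
    exact humem y (hsupp hy)
  have hKcS : Kc ⊆ S := by
    intro v hv
    have := hKc_sub hv
    exact ⟨by have := this.1; linarith, by have := this.2; linarith⟩
  have hg0 : ∀ v, v ∉ Kc → g v = 0 := by
    intro v hv
    by_contra hne
    have hvS : v ∈ S := by
      by_contra h
      exact hne (Set.indicator_of_notMem h _)
    have hψw : ψ (w v) ≠ 0 := by
      rw [hg_def, Set.indicator_of_mem hvS] at hne
      exact hne
    exact hv ⟨w v, subset_tsupport ψ (Function.mem_support.2 hψw), huw v hvS⟩
  have hgcs : HasCompactSupport g := HasCompactSupport.intro hKc_comp hg0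
  have hg_smooth : ContDiff ℝ ((⊤:ℕ∞) : WithTop ℕ∞) g := by
    rw [contDiff_iff_contDiffAt]
    intro v
    by_cases hvS : v ∈ S
    · have hev : g =ᶠ[nhds v] fun v => ψ (w v) :=
        Filter.eventuallyEq_iff_exists_mem.2
          ⟨S, isOpen_Ioo.mem_nhds hvS, fun z hz => Set.indicator_of_mem hz _⟩
      apply ContDiffAt.congr_of_eventuallyEq _ hev
      have hcos : Real.cos (v - π/6) ≠ 0 := by
        apply ne_of_gt
        apply Real.cos_pos_of_mem_Ioo
        exact ⟨by have := hvS.1; linarith, by have := hvS.2; linarith⟩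
      have hw_cd : ContDiffAt ℝ ((⊤:ℕ∞) : WithTop ℕ∞) w v := by
        have ht : ContDiffAt ℝ ((⊤:ℕ∞) : WithTop ℕ∞) (fun v : ℝ => Real.tan (v - π/6)) v :=
          ContDiffAt.comp (g := Real.tan) (f := fun v : ℝ => v - π/6) v (Real.contDiffAt_tan.2 hcos) (contDiffAt_id.sub contDiffAt_const)
        exact (contDiffAt_const.add (contDiffAt_const.mul ht)).div_const _
      exact (hψ.of_le (by simp)).contDiffAt.comp v hw_cd
    · have hvK : v ∉ Kc := fun h => hvS (hKcS h)
      have hopen : IsOpen Kcᶜ := hKc_comp.isClosed.isOpen_compl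
      have hev : g =ᶠ[nhds v] (fun _ => (0:ℂ)) :=
        Filter.eventuallyEq_iff_exists_mem.2
          ⟨Kcᶜ, hopen.mem_nhds hvK, fun z hz => hg0 z hz⟩
      exact contDiffAt_const.congr_of_eventuallyEq hev
  have hg_cont : Continuous g := hg_smooth.continuous
  have hg_int : Integrable g := hg_cont.integrable_of_hasCompactSupport hgcs
  have hFg_int : Integrable (𝓕 g) := integrable_fourier_of_smooth_compsupp hg_smooth hgcs
  have hfpos : ∀ y : ℝ, 0 < 1 - τ*y + τ^2*y^2 := by
    intro y; nlinarith [sq_nonneg (2*τ*y - 1)]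
  have hderiv : ∀ y : ℝ,
      HasDerivAt u (τ * Real.sqrt 3 / (2*(1 - τ*y + τ^2*y^2))) y := by
    intro y
    have h1 : HasDerivAt (fun y : ℝ => (2*τ*y - 1)/Real.sqrt 3) (2*τ/Real.sqrt 3) y := by
      have : HasDerivAt (fun y : ℝ => 2*τ*y - 1) (2*τ) y := by
        simpa using ((hasDerivAt_id y).const_mul (2*τ)).sub_const 1
      exact this.div_const _
    have h2 := (Real.hasDerivAt_arctan ((2*τ*y - 1)/Real.sqrt 3)).comp y h1
    have h3 := h2.add_const (π/6)
    convert h3 using 1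
    case e'_4 => rfl
    case e'_5 => rfl
    case e'_8 => rfl
    have h4 : 1 + ((2*τ*y - 1)/Real.sqrt 3)^2 = 4*(1 - τ*y + τ^2*y^2)/3 := by
      rw [div_pow, hs]; field_simp; ring
    rw [h4]
    rw [div_mul_eq_mul_div, one_mul, div_div, div_eq_div_iff (by linarith [hfpos y]) (ne_of_gt (mul_pos hs0 (by linarith [hfpos y])))]
    linear_combination (4*τ*(1 - τ*y + τ^2*y^2)/3) * hs5
  -- the inner integral
  have inner_eq : ∀ ξ : ℝ,
      (∫ y in (-(1/τ))..(1/τ),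
        ψ y / ((1 - τ * y + τ ^ 2 * y ^ 2 : ℝ) : ℂ) *
          Complex.exp (-Complex.I * ((2 * ξ / (τ * hbar * Real.sqrt 3) : ℝ) : ℂ) *
            ((Real.arctan ((2 * τ * y - 1) / Real.sqrt 3) + π / 6 : ℝ) : ℂ)))
      = ((2/(τ*Real.sqrt 3) : ℝ) : ℂ) * 𝓕 g (ξ/(π*τ*hbar*Real.sqrt 3)) := by
    intro ξ
    set k : ℝ := 2 * ξ / (τ * hbar * Real.sqrt 3) with hk_def
    set G : ℝ → ℂ := fun v => g v * Complex.exp (-Complex.I * (k:ℂ) * (v:ℂ)) with hG_def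
    have hGcont : Continuous G := by
      apply hg_cont.mul
      apply Complex.continuous_exp.comp
      fun_prop
    have hud' : ContinuousOn (fun y : ℝ => τ * Real.sqrt 3 / (2*(1 - τ*y + τ^2*y^2)))
        (Set.uIcc (-(1/τ)) (1/τ)) := by
      apply ContinuousOn.div continuousOn_const (by fun_prop)
      intro y _
      exact ne_of_gt (by linarith [hfpos y])
    have step1 : (∫ y in (-(1/τ))..(1/τ),
          ψ y / ((1 - τ * y + τ ^ 2 * y ^ 2 : ℝ) : ℂ) *
            Complex.exp (-Complex.I * ((k : ℝ) : ℂ) *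
              ((Real.arctan ((2 * τ * y - 1) / Real.sqrt 3) + π / 6 : ℝ) : ℂ)))
        = ∫ y in (-(1/τ))..(1/τ),
            (2/(τ*Real.sqrt 3)) •
              ((fun y => τ * Real.sqrt 3 / (2*(1 - τ*y + τ^2*y^2))) y • (G ∘ u) y) := by
      apply intervalIntegral.integral_congr
      intro y _
      dsimp only
      have e0 : Real.arctan ((2 * τ * y - 1) / Real.sqrt 3) + π / 6 = u y := rfl
      rw [e0]
      simp only [Function.comp_apply, hG_def, hgu y, Complex.real_smul]
      have hcr : (2/(τ*Real.sqrt 3)) * (τ * Real.sqrt 3 / (2*(1 - τ*y + τ^2*y^2)))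
          = (1 - τ*y + τ^2*y^2)⁻¹ := by
        field_simp [(hfpos y).ne']
      rw [show (((2/(τ*Real.sqrt 3)) : ℝ) : ℂ) *
            ((((τ * Real.sqrt 3 / (2*(1 - τ*y + τ^2*y^2))) : ℝ) : ℂ) *
              (ψ y * Complex.exp (-Complex.I * (k:ℂ) * ((u y : ℝ):ℂ))))
          = ((((2/(τ*Real.sqrt 3)) * (τ * Real.sqrt 3 / (2*(1 - τ*y + τ^2*y^2)))) : ℝ) : ℂ) *
              (ψ y * Complex.exp (-Complex.I * (k:ℂ) * ((u y : ℝ):ℂ))) from by push_cast; ring]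
      rw [hcr]
      push_cast
      rw [div_eq_mul_inv]
      ring
    rw [step1, intervalIntegral.integral_smul,
      intervalIntegral.integral_comp_smul_deriv (fun y _ => hderiv y) hud' hGcont, ha, hb]
    have hGsupp : Function.support G ⊆ Set.Ioc (-(π/6)) (π/3) := by
      intro v hv
      have hgv : g v ≠ 0 := by
        intro h
        apply hv
        simp [hG_def, h]
      have hvK : v ∈ Kc := by
        by_contra h
        exact hgv (hg0 v h)
      have := hKc_sub hvK
      exact ⟨this.1, le_of_lt this.2⟩
    rw [intervalIntegral.integral_eq_integral_of_support_subset hGsupp]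
    have hFg : (∫ v, G v) = 𝓕 g (ξ/(π*τ*hbar*Real.sqrt 3)) := by
      rw [Real.fourier_real_eq_integral_exp_smul]
      refine integral_congr_ae (Filter.Eventually.of_forall fun v => ?_)
      rw [hG_def]
      simp only [smul_eq_mul]
      rw [mul_comm]
      congr 1
      have h' : (-2*π*v*(ξ/(π*τ*hbar*Real.sqrt 3))) = -(k*v) := by
        rw [hk_def]
        field_simp
      rw [h']
      congr 1
      push_cast
      ring
    rw [hFg, Complex.real_smul]
  -- outer part
  set c2 : ℝ := 2/(τ*Real.sqrt 3) with hc2_def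
  set cs : ℝ := Real.sqrt (τ*Real.sqrt 3/π) with hcs_def
  set cc : ℝ := 1/(π*τ*hbar*Real.sqrt 3) with hcc_def
  set Fo : ℝ → ℂ := fun v => ((cs * c2 : ℝ) : ℂ) *
    (Complex.exp (((2*π*(v * u x) : ℝ) : ℂ) * Complex.I) • 𝓕 g v) with hFo_def
  have key : ∀ ξ : ℝ,
      (((cs : ℝ) : ℂ) *
        ∫ y in (-(1/τ))..(1/τ),
          ψ y / ((1 - τ * y + τ ^ 2 * y ^ 2 : ℝ) : ℂ) *
            Complex.exp (-Complex.I * ((2 * ξ / (τ * hbar * Real.sqrt 3) : ℝ) : ℂ) *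
              ((Real.arctan ((2 * τ * y - 1) / Real.sqrt 3) + π / 6 : ℝ) : ℂ))) *
        Complex.exp (Complex.I * ((2 * ξ / (τ * hbar * Real.sqrt 3) : ℝ) : ℂ) *
          ((Real.arctan ((2 * τ * x - 1) / Real.sqrt 3) + π / 6 : ℝ) : ℂ))
      = Fo (cc * ξ) := by
    intro ξ
    rw [inner_eq ξ]
    have e0 : Real.arctan ((2 * τ * x - 1) / Real.sqrt 3) + π / 6 = u x := rfl
    rw [e0]
    have e1 : ξ/(π*τ*hbar*Real.sqrt 3) = cc * ξ := by
      rw [hcc_def]; ring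
    rw [e1, hFo_def]
    dsimp only
    simp only [smul_eq_mul]
    have e2 : ((2*π*((cc*ξ) * u x) : ℝ) : ℂ) * Complex.I
        = Complex.I * ((2 * ξ / (τ * hbar * Real.sqrt 3) : ℝ) : ℂ) * ((u x : ℝ) : ℂ) := by
      have e3 : 2*π*((cc*ξ) * u x) = (2 * ξ / (τ * hbar * Real.sqrt 3)) * u x := by
        rw [hcc_def]
        field_simp
      rw [e3]
      push_cast
      ring
    rw [e2]
    push_cast
    ring
  rw [integral_congr_ae (Filter.Eventually.of_forall key)]
  rw [MeasureTheory.Measure.integral_comp_mul_left Fo cc]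
  have hccpos : 0 < cc := by rw [hcc_def]; positivity
  have hccinv : |cc⁻¹| = π*τ*hbar*Real.sqrt 3 := by
    rw [abs_of_pos (inv_pos.2 hccpos), hcc_def, one_div, inv_inv]
  rw [hccinv]
  have hFoval : (∫ v, Fo v) = ((cs*c2 : ℝ) : ℂ) * ψ x := by
    rw [hFo_def]
    rw [MeasureTheory.integral_const_mul]
    congr 1
    calc (∫ v, Complex.exp (((2*π*(v * u x) : ℝ) : ℂ) * Complex.I) • 𝓕 g v)
        = 𝓕⁻ (𝓕 g) (u x) := by
          rw [Real.fourierInv_eq']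
          refine integral_congr_ae (Filter.Eventually.of_forall fun v => ?_)
          norm_num [RCLike.inner_apply, conj_trivial]
          left; ring_nf
      _ = g (u x) := hg_int.fourierInv_fourier_eq hFg_int hg_cont.continuousAt
      _ = ψ x := hgu x
  rw [hFoval]
  rw [Complex.real_smul]
  have hconst : (1 / (hbar * Real.sqrt (4 * π * τ * Real.sqrt 3)))
      * ((π*τ*hbar*Real.sqrt 3) * (cs*c2)) = 1 := by
    rw [hcs_def, hc2_def]
    have h4 : Real.sqrt (4*π*τ*Real.sqrt 3) = 2*π*Real.sqrt (τ*Real.sqrt 3/π) := by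
      rw [show 4*π*τ*Real.sqrt 3 = (2*π)^2 * (τ*Real.sqrt 3/π) by field_simp; ring]
      rw [Real.sqrt_mul (by positivity), Real.sqrt_sq (by positivity)]
    rw [h4]
    have hq : 0 < Real.sqrt (τ*Real.sqrt 3/π) := Real.sqrt_pos.2 (by positivity)
    field_simp
  calc ψ x = ((1:ℝ) : ℂ) * ψ x := by simp
    _ = (((1 / (hbar * Real.sqrt (4 * π * τ * Real.sqrt 3)))
          * ((π*τ*hbar*Real.sqrt 3) * (cs*c2)) : ℝ) : ℂ) * ψ x := by rw [hconst]
    _ = ((1 / (hbar * Real.sqrt (4 * π * τ * Real.sqrt 3)) : ℝ) : ℂ) *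
          (((π*τ*hbar*Real.sqrt 3 : ℝ) : ℂ) * (((cs*c2 : ℝ) : ℂ) * ψ x)) := by
        push_cast
        ring
end

section
/- Let τ > 0, ħ > 0, m > 0 and k ∈ ℝ, and define φ_k : ℝ → ℝ by φ_k(y) = √(τ√3/π) · sin( (2k/(τ√3)) · ( arctan((2τy − 1)/√3) + π/6 ) ). Then φ_k solves the deformed free Schrödinger equation: for every y ∈ ℝ, −(ħ²/(2m)) · (1 − τy + τ²y²) · d/dy [ (1 − τy + τ²y²) · φ_k′(y) ] = (ħ²k²/(2m)) · φ_k(y). -/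
open Real

/-- The flux `f u'` of `u = C sin θ` is `C k cos θ`; differentiating once more gives `-k² u / f`. -/
theorem mul_deriv_mul_deriv_sin_eq {f θ : ℝ → ℝ} {k : ℝ} (C : ℝ)
    (hθ : ∀ y, HasDerivAt θ (k / f y) y) (hf : ∀ y, f y ≠ 0) (y : ℝ) :
    f y * deriv (fun y => f y * deriv (fun y => C * sin (θ y)) y) y
      = -k ^ 2 * (C * sin (θ y)) := by
  have hflux : (fun y => f y * deriv (fun y => C * sin (θ y)) y) = fun y => C * k * cos (θ y) := by
    funext z
    rw [((hθ z).sin.const_mul C).deriv]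
    field_simp [hf z]
  rw [hflux, ((hθ y).cos.const_mul (C * k)).deriv]
  field_simp [hf y]

theorem one_sub_mul_add_sq_mul_sq_pos (τ y : ℝ) : 0 < 1 - τ * y + τ ^ 2 * y ^ 2 := by
  nlinarith [sq_nonneg (2 * τ * y - 1)]

theorem hasDerivAt_deformed_phase {τ : ℝ} (hτ : τ ≠ 0) (k y : ℝ) :
    HasDerivAt (fun y => 2 * k / (τ * √3) * (arctan ((2 * τ * y - 1) / √3) + π / 6))
      (k / (1 - τ * y + τ ^ 2 * y ^ 2)) y := by
  have hlin : HasDerivAt (fun y => (2 * τ * y - 1) / √3) (2 * τ / √3) y := by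
    simpa using (((hasDerivAt_id y).const_mul (2 * τ)).sub_const 1).div_const √3
  refine (((hasDerivAt_arctan _).comp y hlin).add_const (π / 6) |>.const_mul _).congr_deriv ?_
  have h3 : √3 ^ 2 = 3 := sq_sqrt (by norm_num)
  have hf := (one_sub_mul_add_sq_mul_sq_pos τ y).ne'
  field_simp
  linear_combination -k * h3

theorem deformed_free_schrodinger_solution_general (τ hbar m k : ℝ)
    (hτ : 0 < τ) :
    ∀ y : ℝ,
      -(hbar ^ 2 / (2 * m)) * (1 - τ * y + τ ^ 2 * y ^ 2) *
          deriv (fun y : ℝ =>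
            (1 - τ * y + τ ^ 2 * y ^ 2) *
              deriv (fun y : ℝ =>
                Real.sqrt (τ * Real.sqrt 3 / Real.pi) *
                  Real.sin ((2 * k / (τ * Real.sqrt 3)) *
                    (Real.arctan ((2 * τ * y - 1) / Real.sqrt 3) + Real.pi / 6))) y) y
        = (hbar ^ 2 * k ^ 2 / (2 * m)) *
            (Real.sqrt (τ * Real.sqrt 3 / Real.pi) *
              Real.sin ((2 * k / (τ * Real.sqrt 3)) *
                (Real.arctan ((2 * τ * y - 1) / Real.sqrt 3) + Real.pi / 6))) := by
  intro y
  have h := mul_deriv_mul_deriv_sin_eq (f := fun y => 1 - τ * y + τ ^ 2 * y ^ 2)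
    √(τ * √3 / π) (hasDerivAt_deformed_phase hτ.ne' k)
    (fun y => (one_sub_mul_add_sq_mul_sq_pos τ y).ne') y
  beta_reduce at h
  rw [mul_assoc, h]
  ring

/-- The function
`φ_k(y) = √(τ√3/π) sin((2k/(τ√3))(arctan((2τy−1)/√3) + π/6))`
solves the deformed free Schrödinger equation
`−(ħ²/(2m)) f(y) d/dy (f(y) φ_k′(y)) = (ħ²k²/(2m)) φ_k(y)` with `f(y) = 1 − τy + τ²y²`. -/
theorem deformed_free_schrodinger_solution (τ hbar m k : ℝ)
    (hτ : 0 < τ) (hhbar : 0 < hbar) (hm : 0 < m) :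
    ∀ y : ℝ,
      -(hbar ^ 2 / (2 * m)) * (1 - τ * y + τ ^ 2 * y ^ 2) *
          deriv (fun y : ℝ =>
            (1 - τ * y + τ ^ 2 * y ^ 2) *
              deriv (fun y : ℝ =>
                Real.sqrt (τ * Real.sqrt 3 / Real.pi) *
                  Real.sin ((2 * k / (τ * Real.sqrt 3)) *
                    (Real.arctan ((2 * τ * y - 1) / Real.sqrt 3) + Real.pi / 6))) y) y
        = (hbar ^ 2 * k ^ 2 / (2 * m)) *
            (Real.sqrt (τ * Real.sqrt 3 / Real.pi) *
              Real.sin ((2 * k / (τ * Real.sqrt 3)) *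
                (Real.arctan ((2 * τ * y - 1) / Real.sqrt 3) + Real.pi / 6))) :=
  deformed_free_schrodinger_solution_general τ hbar m k hτ
end

section
/- Let τ > 0, a > 0 with τa ≤ 1 (i.e. a ≤ ℓ_max = 1/τ), let ħ > 0, m > 0 and let n be a positive integer. Then the deformed energy level is bounded by the undeformed one: 3 n² π² τ² ħ² / ( 8 m ( arctan((2τa − 1)/√3) + π/6 )² ) ≤ n² π² ħ² / (2 m a²); equivalently E_n^y = (3/4) ( τa / ( arctan((2τa−1)/√3) + π/6 ) )² E_n^x ≤ E_n^x, so the position deformation lowers the energy levels of a particle in a box. -/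
/-!
With `t = τ a ∈ (0, 1]`, the claim is `(√3 / 2) t ≤ arctan ((2t - 1) / √3) + π / 6`.
Since `arctan (-1 / √3) = -π / 6`, the right side is the increment of `arctan` between
`-1 / √3` and `(2t - 1) / √3`, two points of `[-1 / √3, 1 / √3]`, where `arctan' ≥ 3 / 4`;
the mean value theorem bounds it below by `(3 / 4) (2t / √3) = (√3 / 2) t`.
-/

open Real Set

theorem Real.one_div_one_add_sq_mul_sub_le_arctan_sub {r x y : ℝ} (hx : x ∈ Icc (-r) r)
    (hy : y ∈ Icc (-r) r) (hxy : x ≤ y) :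
    1 / (1 + r ^ 2) * (y - x) ≤ arctan y - arctan x := by
  refine (convex_Icc (-r) r).mul_sub_le_image_sub_of_le_deriv continuous_arctan.continuousOn
    differentiable_arctan.differentiableOn (fun z hz => ?_) x hx y hy hxy
  rw [interior_Icc] at hz
  simp only [deriv_arctan]
  have hz_sq : z ^ 2 ≤ r ^ 2 := sq_le_sq' hz.1.le hz.2.le
  gcongr

theorem sqrt_three_div_two_mul_le_arctan_add_pi_div_six {t : ℝ} (ht₀ : 0 ≤ t) (ht₁ : t ≤ 1) :
    √3 / 2 * t ≤ arctan ((2 * t - 1) / √3) + π / 6 := by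
  have mem : ∀ s ∈ Icc (0 : ℝ) 1, (2 * s - 1) / √3 ∈ Icc (-(1 / √3)) (1 / √3) := by
    rintro s ⟨hs₀, hs₁⟩
    rw [← neg_div]
    constructor <;> gcongr <;> linarith
  have h_slope := one_div_one_add_sq_mul_sub_le_arctan_sub (mem 0 (by simp)) (mem t ⟨ht₀, ht₁⟩)
    (by gcongr)
  have h_arctan : arctan ((2 * 0 - 1) / √3) = -(π / 6) := by
    rw [mul_zero, zero_sub, neg_div, arctan_neg, one_div, arctan_inv_sqrt_three]
  have h_chord :
      1 / (1 + (1 / √3) ^ 2) * ((2 * t - 1) / √3 - (2 * 0 - 1) / √3) = √3 / 2 * t := by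
    field_simp
    rw [sq_sqrt zero_le_three]
    ring
  linarith

theorem deformed_energy_le_box_energy_general (τ a hbar m : ℝ) (n : ℕ)
    (hτ : 0 < τ) (ha : 0 < a) (hτa : τ * a ≤ 1)
    (hm : 0 < m) :
    3 * (n : ℝ) ^ 2 * Real.pi ^ 2 * τ ^ 2 * hbar ^ 2 /
        (8 * m * (Real.arctan ((2 * τ * a - 1) / Real.sqrt 3) + Real.pi / 6) ^ 2)
      ≤ (n : ℝ) ^ 2 * Real.pi ^ 2 * hbar ^ 2 / (2 * m * a ^ 2) := by
  have hK : √3 / 2 * (τ * a) ≤ arctan ((2 * τ * a - 1) / √3) + π / 6 := by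
    simpa only [mul_assoc] using
      sqrt_three_div_two_mul_le_arctan_add_pi_div_six (mul_pos hτ ha).le hτa
  set K := arctan ((2 * τ * a - 1) / √3) + π / 6
  have hK_pos : 0 < K := lt_of_lt_of_le (by positivity) hK
  have hK_sq : 3 * (τ * a) ^ 2 ≤ 4 * K ^ 2 := by
    have := pow_le_pow_left₀ (by positivity) hK 2
    rw [mul_pow, div_pow, sq_sqrt zero_le_three] at this
    linarith
  rw [div_le_div_iff₀ (by positivity) (by positivity)]
  have hC : 0 ≤ 2 * m * (n : ℝ) ^ 2 * π ^ 2 * hbar ^ 2 := by positivity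
  linear_combination mul_le_mul_of_nonneg_left hK_sq hC

/-- For `τ > 0`, `0 < a` with `τa ≤ 1`, the deformed box energy level
is bounded above by the undeformed one:
`3n²π²τ²ħ²/(8m(arctan((2τa−1)/√3)+π/6)²) ≤ n²π²ħ²/(2ma²)`. -/
theorem deformed_energy_le_box_energy (τ a hbar m : ℝ) (n : ℕ)
    (hτ : 0 < τ) (ha : 0 < a) (hτa : τ * a ≤ 1)
    (hhbar : 0 < hbar) (hm : 0 < m) (hn : 0 < n) :
    3 * (n : ℝ) ^ 2 * Real.pi ^ 2 * τ ^ 2 * hbar ^ 2 /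
        (8 * m * (Real.arctan ((2 * τ * a - 1) / Real.sqrt 3) + Real.pi / 6) ^ 2)
      ≤ (n : ℝ) ^ 2 * Real.pi ^ 2 * hbar ^ 2 / (2 * m * a ^ 2) :=
  deformed_energy_le_box_energy_general τ a hbar m n hτ ha hτa hm
end
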